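/- arXiv:1708.01418 — 3 statements merged into one kernel-verified Lean document; each statement's English description precedes it below -/
import Mathlib

section
/- Four-term theta identity (Lemma 7.2 of the paper): under the theta axioms, let x₁, x₂, x₃, x₄, y₁, y₂, y₃, y₄ ∈ ℂ with x₁+x₂+x₃+x₄ = y₁+y₂+y₃+y₄ and y_i − y_j ∉ Λ for all i ≠ j. Then ∑_{i=1}^{4} [ ∏_{j=1}^{4} ϑ(y_i − x_j) ] / [ ∏_{j≠i} ϑ(y_i − y_j) ] = 0. -/
/-
Induction on the number `n` of points `y i`, the case `n = 2` being the oddness of `ϑ`.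
For `n ≥ 3` keep all but two of the `x j` fixed and replace the remaining two by `w` and
`σ - w`. The resulting sum `G w` transforms under `w ↦ w + 1`, `w ↦ w + τ` like
`ϑ (w - a) ϑ (w - b)` with `a + b = σ`, and at `w = y k` it collapses (as `ϑ 0 = 0`) to the
identity for the `n - 1` points `y i`, `i ≠ k`; so `G` vanishes on every `y k + Λ`. Multiplied by
`∏ ϑ (w - x j)` over the fixed `x j`, it transforms like `D w = ∏ ϑ (w - y i)`, whose zeros are
the simple zeros `y i + Λ`. The quotient is then an entire elliptic function, constant by
Liouville, and it vanishes at a fixed `x j` chosen off the `y i + Λ`; continuity in that `x j`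
removes this last restriction.
-/

noncomputable section

/-- The lattice `ℤ + τℤ` in `ℂ`. -/
def lattice (τ : ℂ) : Set ℂ := {z : ℂ | ∃ n m : ℤ, z = (n : ℂ) + (m : ℂ) * τ}

open Complex Filter Function Finset
open scoped Real

lemma zero_mem_lattice (τ : ℂ) : (0 : ℂ) ∈ lattice τ := ⟨0, 0, by simp⟩

lemma sub_mem_lattice {τ a b : ℂ} (ha : a ∈ lattice τ) (hb : b ∈ lattice τ) :
    a - b ∈ lattice τ := by
  obtain ⟨n, m, rfl⟩ := ha
  obtain ⟨n', m', rfl⟩ := hb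
  exact ⟨n - n', m - m', by push_cast; ring⟩

lemma countable_lattice (τ : ℂ) : (lattice τ).Countable :=
  (Set.countable_range fun p : ℤ × ℤ => (p.1 : ℂ) + p.2 * τ).mono <| by
    rintro _ ⟨n, m, rfl⟩
    exact ⟨(n, m), rfl⟩

lemma linearIndependent_one_of_im_pos {τ : ℂ} (hτ : 0 < τ.im) : LinearIndependent ℝ ![1, τ] := by
  refine LinearIndependent.pair_iff.2 fun s t h => ?_
  have ht : t * τ.im = 0 := by simpa using congrArg Complex.im h
  have ht : t = 0 := (mul_eq_zero.1 ht).resolve_right hτ.ne'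
  subst ht
  simpa using congrArg Complex.re h

lemma Differentiable.apply_eq_apply_of_periodic {τ : ℂ} (hτ : 0 < τ.im) {f : ℂ → ℂ}
    (hf : Differentiable ℂ f) (h1 : Periodic f 1) (hτf : Periodic f τ) (z w : ℂ) :
    f z = f w := by
  let L : PeriodPair := ⟨1, τ, linearIndependent_one_of_im_pos hτ⟩
  refine hf.apply_eq_apply_of_bounded
    (IsZLattice.isCompact_range_of_periodic L.lattice f hf.continuous ?_).isBounded z w
  intro z l hl
  obtain ⟨m, n, rfl⟩ := PeriodPair.mem_lattice.1 hl
  exact (h1.int_mul m).add_period (hτf.int_mul n) z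

lemma differentiable_div_of_simple_zeros {K D : ℂ → ℂ} (hK : Differentiable ℂ K)
    (hD : Differentiable ℂ D) (hzeros : ∀ e, D e = 0 → K e = 0 ∧ deriv D e ≠ 0) :
    Differentiable ℂ fun w => if D w = 0 then deriv K w / deriv D w else K w / D w := by
  intro b
  by_cases hb : D b = 0
  · obtain ⟨hKb, hDb⟩ := hzeros b hb
    have hdslope {f : ℂ → ℂ} (hf : Differentiable ℂ f) : Differentiable ℂ (dslope f b) :=
      differentiableOn_univ.1 ((Complex.differentiableOn_dslope univ_mem).2 hf.differentiableOn)
    have hDb' : dslope D b b ≠ 0 := by rwa [dslope_same]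
    have hfactor {f : ℂ → ℂ} (hf : f b = 0) (w : ℂ) : f w = (w - b) * dslope f b w := by
      simpa [hf] using (sub_smul_dslope f b w).symm
    refine ((hdslope hK b).div (hdslope hD b) hDb').congr_of_eventuallyEq ?_
    filter_upwards [(hdslope hD).continuous.continuousAt.eventually_ne hDb'] with w hw
    rcases eq_or_ne w b with rfl | hwb
    · simp [hb, dslope_same]
    · have hDw : D w ≠ 0 := by
        rw [hfactor hb]; exact mul_ne_zero (sub_ne_zero.2 hwb) hw
      simp only [if_neg hDw]
      rw [Pi.div_apply, hfactor hKb w, hfactor hb w, mul_div_mul_left _ _ (sub_ne_zero.2 hwb)]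
  · refine ((hK b).div (hD b) hb).congr_of_eventuallyEq ?_
    filter_upwards [hD.continuous.continuousAt.eventually_ne hb] with w hw
    simp [hw]

def thetaFactor (τ : ℂ) (m : ℕ) (σ w : ℂ) : ℂ :=
  (-cexp (-π * I * τ)) ^ m * cexp (-2 * π * I * (m * w - σ))

lemma thetaFactor_ne_zero (τ : ℂ) (m : ℕ) (σ w : ℂ) : thetaFactor τ m σ w ≠ 0 :=
  mul_ne_zero (pow_ne_zero _ (neg_ne_zero.2 (exp_ne_zero _))) (exp_ne_zero _)

lemma thetaFactor_add (τ : ℂ) (m m' : ℕ) (σ σ' w : ℂ) :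
    thetaFactor τ (m + m') (σ + σ') w = thetaFactor τ m σ w * thetaFactor τ m' σ' w := by
  simp only [thetaFactor, pow_add, Nat.cast_add]
  rw [show -2 * π * I * ((m + m' : ℂ) * w - (σ + σ')) =
    -2 * π * I * (m * w - σ) + -2 * π * I * (m' * w - σ') by ring, exp_add]
  ring

/-- `f` transforms like a product of `m` translates `ϑ (· - a)` of the theta function with
`∑ a = σ`. -/
structure IsThetaFunction (τ : ℂ) (m : ℕ) (σ : ℂ) (f : ℂ → ℂ) : Prop where
  add_one : ∀ w, f (w + 1) = (-1) ^ m * f w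
  add_tau : ∀ w, f (w + τ) = thetaFactor τ m σ w * f w

def quasiPeriods (f : ℂ → ℂ) : AddSubgroup ℂ where
  carrier := {l | ∃ u : ℂ → ℂ, Differentiable ℂ u ∧ (∀ w, u w ≠ 0) ∧ ∀ w, f (w + l) = u w * f w}
  zero_mem' := ⟨fun _ => 1, differentiable_const _, fun _ => one_ne_zero, by simp⟩
  add_mem' := by
    rintro a b ⟨u, hu, hu0, hfu⟩ ⟨v, hv, hv0, hfv⟩
    refine ⟨fun w => u (w + b) * v w, by fun_prop, fun w => mul_ne_zero (hu0 _) (hv0 _),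
      fun w => ?_⟩
    rw [add_comm a, ← add_assoc, hfu, hfv, mul_assoc]
  neg_mem' := by
    rintro a ⟨u, hu, hu0, hfu⟩
    refine ⟨fun w => (u (w - a))⁻¹, fun w => ((hu _).comp w (by fun_prop)).inv (hu0 _),
      fun w => inv_ne_zero (hu0 _), fun w => ?_⟩
    rw [eq_inv_mul_iff_mul_eq₀ (hu0 _), ← sub_eq_add_neg, ← hfu, sub_add_cancel]

lemma deriv_ne_zero_of_mem_quasiPeriods {f : ℂ → ℂ} (hf : Differentiable ℂ f) (h0 : f 0 = 0)
    (h0' : deriv f 0 ≠ 0) {l : ℂ} (hl : l ∈ quasiPeriods f) : deriv f l ≠ 0 := by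
  obtain ⟨u, hu, hu0, hfu⟩ := hl
  have : deriv (fun w => f (w + l)) 0 = deriv (fun w => u w * f w) 0 := by simp_rw [hfu]
  rw [deriv_comp_add_const, zero_add, deriv_fun_mul (hu 0) (hf 0), h0, mul_zero, zero_add] at this
  rw [this]
  exact mul_ne_zero (hu0 0) h0'

namespace IsThetaFunction

variable {τ σ σ' : ℂ} {m m' : ℕ} {f g : ℂ → ℂ}

lemma one : IsThetaFunction τ 0 0 fun _ => 1 :=
  ⟨fun _ => by simp, fun _ => by simp [thetaFactor]⟩

lemma mul (hf : IsThetaFunction τ m σ f) (hg : IsThetaFunction τ m' σ' g) :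
    IsThetaFunction τ (m + m') (σ + σ') fun w => f w * g w where
  add_one w := by rw [hf.add_one, hg.add_one, pow_add]; ring
  add_tau w := by rw [hf.add_tau, hg.add_tau, thetaFactor_add]; ring

lemma const_mul (hf : IsThetaFunction τ m σ f) (c : ℂ) :
    IsThetaFunction τ m σ fun w => c * f w where
  add_one w := by rw [hf.add_one]; ring
  add_tau w := by rw [hf.add_tau]; ring

lemma sum {ι : Type*} {S : Finset ι} {f : ι → ℂ → ℂ}
    (hf : ∀ i ∈ S, IsThetaFunction τ m σ (f i)) :
    IsThetaFunction τ m σ fun w => ∑ i ∈ S, f i w where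
  add_one w := by rw [Finset.mul_sum]; exact Finset.sum_congr rfl fun i hi => (hf i hi).add_one w
  add_tau w := by rw [Finset.mul_sum]; exact Finset.sum_congr rfl fun i hi => (hf i hi).add_tau w

lemma lattice_subset_quasiPeriods (hf : IsThetaFunction τ m σ f) :
    lattice τ ⊆ quasiPeriods f := by
  have h1 : (1 : ℂ) ∈ quasiPeriods f :=
    ⟨fun _ => (-1) ^ m, differentiable_const _, fun _ => by simp, hf.add_one⟩
  have hτ : τ ∈ quasiPeriods f :=
    ⟨thetaFactor τ m σ, by unfold thetaFactor; fun_prop, thetaFactor_ne_zero τ m σ, hf.add_tau⟩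
  rintro _ ⟨n, k, rfl⟩
  simpa using add_mem (zsmul_mem h1 n) (zsmul_mem hτ k)

lemma eq_zero_of_sub_mem_lattice (hf : IsThetaFunction τ m σ f) {z w : ℂ} (hz : f z = 0)
    (hwz : w - z ∈ lattice τ) : f w = 0 := by
  obtain ⟨u, -, -, hfu⟩ := hf.lattice_subset_quasiPeriods hwz
  simpa [hz] using hfu z

end IsThetaFunction

/-- The quotient `K / D` extends to an entire doubly periodic function, hence is constant. -/
theorem IsThetaFunction.eq_zero_of_vanishes_on_simple_zeros {τ σ : ℂ} {m : ℕ} (hτ : 0 < τ.im)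
    {K D : ℂ → ℂ} (hK : Differentiable ℂ K) (hD : Differentiable ℂ D)
    (hKθ : IsThetaFunction τ m σ K) (hDθ : IsThetaFunction τ m σ D)
    (hdense : Dense {w | D w ≠ 0}) (hzeros : ∀ e, D e = 0 → K e = 0 ∧ deriv D e ≠ 0)
    {w₀ : ℂ} (hDw₀ : D w₀ ≠ 0) (hKw₀ : K w₀ = 0) (w : ℂ) : K w = 0 := by
  set H : ℂ → ℂ := fun w => if D w = 0 then deriv K w / deriv D w else K w / D w
  have hH : Differentiable ℂ H := differentiable_div_of_simple_zeros hK hD hzeros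
  have hKH (w : ℂ) : K w = H w * D w := by
    by_cases hw : D w = 0
    · simp [hw, (hzeros w hw).1]
    · simp [H, hw]
  have hperiodic {l : ℂ} {c : ℂ → ℂ} (hc : ∀ w, c w ≠ 0) (hKl : ∀ w, K (w + l) = c w * K w)
      (hDl : ∀ w, D (w + l) = c w * D w) : Periodic H l := by
    refine congrFun <| Continuous.ext_on hdense (hH.continuous.comp (continuous_add_const l))
      hH.continuous fun w (hw : D w ≠ 0) => ?_
    have h := hKH (w + l)
    rw [hKl, hDl, hKH w] at h
    exact mul_left_cancel₀ (mul_ne_zero (hc w) hw) (by linear_combination -h)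
  have hconst := hH.apply_eq_apply_of_periodic hτ
    (hperiodic (fun _ => by simp) hKθ.add_one hDθ.add_one)
    (hperiodic (thetaFactor_ne_zero τ m σ) hKθ.add_tau hDθ.add_tau) w w₀
  rw [hKH, hconst, (mul_eq_zero.1 ((hKH w₀).symm.trans hKw₀)).resolve_right hDw₀, zero_mul]

section Theta

variable {τ : ℂ} {ϑ : ℂ → ℂ} {ι : Type*}

lemma IsThetaFunction.comp_sub (hϑ : IsThetaFunction τ 1 0 ϑ) (a : ℂ) :
    IsThetaFunction τ 1 a fun w => ϑ (w - a) where
  add_one w := by rw [add_sub_right_comm, hϑ.add_one]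
  add_tau w := by
    rw [add_sub_right_comm, hϑ.add_tau]
    simp only [thetaFactor, Nat.cast_one, one_mul, sub_zero]

def thetaProd (ϑ : ℂ → ℂ) (A : Multiset ℂ) (w : ℂ) : ℂ :=
  (A.map fun a => ϑ (w - a)).prod

lemma thetaProd_cons (a : ℂ) (A : Multiset ℂ) (w : ℂ) :
    thetaProd ϑ (a ::ₘ A) w = ϑ (w - a) * thetaProd ϑ A w := by
  simp [thetaProd]

lemma Differentiable.thetaProd (hϑ : Differentiable ℂ ϑ) (A : Multiset ℂ) :
    Differentiable ℂ (thetaProd ϑ A) := by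
  induction A using Multiset.induction_on with
  | empty => exact differentiable_const (1 : ℂ)
  | cons a A ih =>
    rw [funext (thetaProd_cons a A)]
    fun_prop

lemma prod_eq_thetaProd (S : Finset ι) (y : ι → ℂ) (w : ℂ) :
    ∏ i ∈ S, ϑ (w - y i) = thetaProd ϑ (S.val.map y) w := by
  rw [Finset.prod_eq_multiset_prod, thetaProd, Multiset.map_map]
  rfl

lemma IsThetaFunction.thetaProd (hϑ : IsThetaFunction τ 1 0 ϑ) (A : Multiset ℂ) :
    IsThetaFunction τ (Multiset.card A) A.sum (thetaProd ϑ A) := by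
  induction A using Multiset.induction_on with
  | empty => exact IsThetaFunction.one
  | cons a A ih =>
    rw [funext (thetaProd_cons a A), Multiset.card_cons, Multiset.sum_cons, add_comm _ 1]
    exact (hϑ.comp_sub a).mul ih

lemma dense_setOf_thetaProd_ne_zero (hϑ_zero : ∀ z, ϑ z = 0 → z ∈ lattice τ) (A : Multiset ℂ) :
    Dense {w | thetaProd ϑ A w ≠ 0} := by
  refine Set.Countable.dense_compl ℂ
    (((Multiset.toFinset A).countable_toSet.biUnion fun a _ =>
      (countable_lattice τ).image (a + ·)).mono ?_)
  intro w (hw : thetaProd ϑ A w = 0)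
  obtain ⟨_, ha, hwa⟩ := Multiset.mem_map.1 (Multiset.prod_eq_zero_iff.1 hw)
  exact Set.mem_biUnion (by simpa using ha) ⟨w - _, hϑ_zero _ hwa, add_sub_cancel _ _⟩

lemma IsThetaFunction.prod (hϑ : IsThetaFunction τ 1 0 ϑ) (S : Finset ι)
    (y : ι → ℂ) : IsThetaFunction τ #S (∑ i ∈ S, y i) fun w => ∏ i ∈ S, ϑ (w - y i) := by
  simpa [prod_eq_thetaProd] using hϑ.thetaProd (S.val.map y)

lemma dense_setOf_prod_ne_zero (hϑ_zero : ∀ z, ϑ z = 0 → z ∈ lattice τ) (S : Finset ι)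
    (y : ι → ℂ) : Dense {w | ∏ i ∈ S, ϑ (w - y i) ≠ 0} := by
  simpa [prod_eq_thetaProd] using dense_setOf_thetaProd_ne_zero hϑ_zero (S.val.map y)

variable [DecidableEq ι]

lemma deriv_prod_ne_zero (hϑ_hol : Differentiable ℂ ϑ)
    (hϑ_zero : ∀ z, ϑ z = 0 ↔ z ∈ lattice τ) (hsimple : ∀ l ∈ lattice τ, deriv ϑ l ≠ 0)
    {S : Finset ι} {y : ι → ℂ} (hy : ∀ i ∈ S, ∀ j ∈ S, i ≠ j → y i - y j ∉ lattice τ)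
    {k : ι} (hk : k ∈ S) {e : ℂ} (he : e - y k ∈ lattice τ) :
    deriv (fun w => ∏ i ∈ S, ϑ (w - y i)) e ≠ 0 := by
  have hsplit : (fun w => ∏ i ∈ S, ϑ (w - y i)) =
      fun w => ϑ (w - y k) * ∏ i ∈ S.erase k, ϑ (w - y i) := by
    ext w
    exact (Finset.mul_prod_erase S (fun i => ϑ (w - y i)) hk).symm
  have hrest : ∏ i ∈ S.erase k, ϑ (e - y i) ≠ 0 := by
    refine Finset.prod_ne_zero_iff.2 fun j hj hej => ?_
    obtain ⟨hjk, hjS⟩ := Finset.mem_erase.1 hj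
    refine hy k hk j hjS hjk.symm ?_
    simpa using sub_mem_lattice ((hϑ_zero _).1 hej) he
  rw [hsplit, deriv_fun_mul (by fun_prop) (by fun_prop), deriv_comp_sub_const,
    (hϑ_zero _).2 he, zero_mul, add_zero]
  exact mul_ne_zero (hsimple _ he) hrest

def thetaSum (ϑ : ℂ → ℂ) (S : Finset ι) (y : ι → ℂ) (X : Multiset ℂ) : ℂ :=
  ∑ i ∈ S, (X.map fun x => ϑ (y i - x)).prod / ∏ j ∈ S.erase i, ϑ (y i - y j)

lemma thetaSum_cons_self (hϑ0 : ϑ 0 = 0) {S : Finset ι} {y : ι → ℂ} {k : ι} (hk : k ∈ S)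
    (hne : ∀ i ∈ S, i ≠ k → ϑ (y i - y k) ≠ 0) (X : Multiset ℂ) :
    thetaSum ϑ S y (y k ::ₘ X) = thetaSum ϑ (S.erase k) y X := by
  rw [thetaSum, ← Finset.add_sum_erase S _ hk]
  simp only [Multiset.map_cons, Multiset.prod_cons, sub_self, hϑ0, zero_mul, zero_div, zero_add]
  refine Finset.sum_congr rfl fun i hi => ?_
  obtain ⟨hik, hiS⟩ := Finset.mem_erase.1 hi
  rw [← Finset.mul_prod_erase (S.erase i) _ (Finset.mem_erase.2 ⟨hik.symm, hk⟩),
    Finset.erase_right_comm, mul_div_mul_left _ _ (hne i hiS hik)]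

lemma thetaSum_pair (hϑ_odd : ∀ z, ϑ (-z) = -ϑ z) {i j : ι} (hij : i ≠ j) (y : ι → ℂ)
    {a b : ℂ} (hab : a + b = y i + y j) : thetaSum ϑ {i, j} y {a, b} = 0 := by
  obtain rfl : b = y i + y j - a := by linear_combination hab
  rw [thetaSum, Finset.sum_pair hij, Finset.erase_insert (by simpa using hij), Finset.pair_comm,
    Finset.erase_insert (by simpa using hij.symm)]
  simp only [Finset.prod_singleton, Multiset.insert_eq_cons, Multiset.map_cons,
    Multiset.prod_cons, Multiset.map_singleton, Multiset.prod_singleton]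
  rw [show y i - (y i + y j - a) = -(y j - a) by ring,
    show y j - (y i + y j - a) = -(y i - a) by ring, show y j - y i = -(y i - y j) by ring,
    hϑ_odd, hϑ_odd, hϑ_odd]
  ring

theorem thetaSum_cons_cons_eq_zero_of_generic (hτ : 0 < τ.im) (hϑ_hol : Differentiable ℂ ϑ)
    (hϑ_zero : ∀ z, ϑ z = 0 ↔ z ∈ lattice τ) (hϑ : IsThetaFunction τ 1 0 ϑ)
    (hϑ_odd : ∀ z, ϑ (-z) = -ϑ z) (hsimple : ∀ l ∈ lattice τ, deriv ϑ l ≠ 0)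
    {S : Finset ι} {y : ι → ℂ} (hy : ∀ i ∈ S, ∀ j ∈ S, i ≠ j → y i - y j ∉ lattice τ)
    (hIH : ∀ k ∈ S, ∀ X : Multiset ℂ, Multiset.card X = #(S.erase k) →
      X.sum = ∑ i ∈ S.erase k, y i → thetaSum ϑ (S.erase k) y X = 0)
    {X₀ : Multiset ℂ} (hcard : 2 + Multiset.card X₀ = #S) {σ : ℂ}
    (hσ : σ + X₀.sum = ∑ i ∈ S, y i) {x₀ : ℂ} (hx₀ : x₀ ∈ X₀)
    (hgen : ∏ i ∈ S, ϑ (x₀ - y i) ≠ 0) (w : ℂ) :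
    thetaSum ϑ S y (w ::ₘ (σ - w) ::ₘ X₀) = 0 := by
  have hϑ0 : ϑ 0 = 0 := (hϑ_zero 0).2 (zero_mem_lattice τ)
  set G : ℂ → ℂ := fun w => thetaSum ϑ S y (w ::ₘ (σ - w) ::ₘ X₀)
  set c : ι → ℂ := fun i => (X₀.map fun x => ϑ (y i - x)).prod / ∏ j ∈ S.erase i, ϑ (y i - y j)
  have hG_eq : G = fun w => ∑ i ∈ S, -c i * (ϑ (w - y i) * ϑ (w - (σ - y i))) := by
    ext w
    refine Finset.sum_congr rfl fun i _ => ?_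
    simp only [Multiset.map_cons, Multiset.prod_cons, c]
    rw [← neg_sub w, hϑ_odd, show y i - (σ - w) = w - (σ - y i) by ring]
    ring
  have hG : Differentiable ℂ G := by rw [hG_eq]; fun_prop
  have hGθ : IsThetaFunction τ 2 σ G := by
    rw [hG_eq]
    exact IsThetaFunction.sum fun i _ => by
      simpa using ((hϑ.comp_sub (y i)).mul (hϑ.comp_sub (σ - y i))).const_mul (-c i)
  have hGy : ∀ k ∈ S, G (y k) = 0 := by
    intro k hk
    change thetaSum ϑ S y (y k ::ₘ (σ - y k) ::ₘ X₀) = 0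
    rw [thetaSum_cons_self hϑ0 hk fun i _ hik h => hy i ‹_› k hk hik ((hϑ_zero _).1 h)]
    refine hIH k hk _ ?_ ?_
    · rw [Multiset.card_cons, card_erase_of_mem hk]
      omega
    · rw [Multiset.sum_cons, sum_erase_eq_sub hk]
      linear_combination hσ
  -- the factor `thetaProd ϑ X₀` gives `G` the type of `∏ ϑ (w - y i)` and a zero at `x₀`
  have hK := IsThetaFunction.eq_zero_of_vanishes_on_simple_zeros hτ
    (K := fun w => G w * thetaProd ϑ X₀ w) (D := fun w => ∏ i ∈ S, ϑ (w - y i))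
    (hG.mul (hϑ_hol.thetaProd X₀)) (by fun_prop)
    (by simpa only [hcard, hσ] using hGθ.mul (hϑ.thetaProd X₀)) (hϑ.prod S y)
    (dense_setOf_prod_ne_zero (fun z => (hϑ_zero z).1) S y)
    (fun e he => by
      obtain ⟨k, hk, hek⟩ := Finset.prod_eq_zero_iff.1 he
      exact ⟨by rw [hGθ.eq_zero_of_sub_mem_lattice (hGy k hk) ((hϑ_zero _).1 hek), zero_mul],
        deriv_prod_ne_zero hϑ_hol hϑ_zero hsimple hy hk ((hϑ_zero _).1 hek)⟩)
    hgen (mul_eq_zero_of_right _ (Multiset.prod_eq_zero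
      (Multiset.mem_map.2 ⟨x₀, hx₀, by rw [sub_self, hϑ0]⟩)))
  refine congrFun (Continuous.ext_on (dense_setOf_thetaProd_ne_zero (fun z => (hϑ_zero z).1) X₀)
    hG.continuous continuous_const fun w hw => (mul_eq_zero.1 (hK w)).resolve_right hw) w

theorem thetaSum_eq_zero (hτ : 0 < τ.im) (hϑ_hol : Differentiable ℂ ϑ)
    (hϑ_zero : ∀ z, ϑ z = 0 ↔ z ∈ lattice τ) (hϑ : IsThetaFunction τ 1 0 ϑ)
    (hϑ_odd : ∀ z, ϑ (-z) = -ϑ z) (hsimple : ∀ l ∈ lattice τ, deriv ϑ l ≠ 0)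
    {S : Finset ι} {y : ι → ℂ} (hy : ∀ i ∈ S, ∀ j ∈ S, i ≠ j → y i - y j ∉ lattice τ)
    {X : Multiset ℂ} (hS : 2 ≤ #S) (hcard : Multiset.card X = #S)
    (hsum : X.sum = ∑ i ∈ S, y i) : thetaSum ϑ S y X = 0 := by
  obtain ⟨n, hn⟩ := Nat.exists_eq_add_of_le' hS
  induction n generalizing S X with
  | zero =>
    obtain ⟨i, j, hij, rfl⟩ := Finset.card_eq_two.1 hn
    obtain ⟨a, b, rfl⟩ := Multiset.card_eq_two.1 (hcard.trans hn)
    exact thetaSum_pair hϑ_odd hij y (by simpa [Finset.sum_pair hij] using hsum)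
  | succ n ih =>
    obtain ⟨a, X₁, rfl, h₁⟩ := Multiset.card_eq_succ_iff.1 (hcard.trans hn)
    obtain ⟨b, X₂, rfl, h₂⟩ := Multiset.card_eq_succ_iff.1 h₁
    obtain ⟨t, X₃, rfl, h₃⟩ := Multiset.card_eq_succ_iff.1 h₂
    have hIH : ∀ k ∈ S, ∀ X : Multiset ℂ, Multiset.card X = #(S.erase k) →
        X.sum = ∑ i ∈ S.erase k, y i → thetaSum ϑ (S.erase k) y X = 0 := by
      intro k hk X hX hXsum
      have hk' : #(S.erase k) = n + 2 := by rw [card_erase_of_mem hk]; omega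
      exact ih (fun i hi j hj => hy i (mem_of_mem_erase hi) j (mem_of_mem_erase hj))
        (by omega) hX hXsum hk'
    -- move `t` off the translates of the `y i`, keeping `∑ X` fixed
    set σ : ℂ → ℂ := fun t' => ∑ i ∈ S, y i - t' - X₃.sum
    have hcont : Continuous fun t' => thetaSum ϑ S y (a ::ₘ (σ t' - a) ::ₘ t' ::ₘ X₃) := by
      have := hϑ_hol.continuous
      simp only [thetaSum, Multiset.map_cons, Multiset.prod_cons, σ]
      fun_prop
    have hgeneric := Continuous.ext_on (dense_setOf_prod_ne_zero (fun z => (hϑ_zero z).1) S y)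
      hcont continuous_const fun t' ht' =>
        thetaSum_cons_cons_eq_zero_of_generic hτ hϑ_hol hϑ_zero hϑ hϑ_odd hsimple hy hIH
          (X₀ := t' ::ₘ X₃) (by rw [Multiset.card_cons]; omega) (by simp [σ])
          (Multiset.mem_cons_self t' X₃) ht' a
    have hb : σ t - a = b := by
      simp only [Multiset.sum_cons] at hsum
      simp only [σ]
      linear_combination -hsum
    simpa [hb] using congrFun hgeneric t

end Theta

/-- Four-term theta identity (Lemma 7.2): if `∑ xᵢ = ∑ yᵢ` and `yᵢ − yⱼ ∉ Λ` for `i ≠ j`,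
then `∑ᵢ ∏ⱼ ϑ(yᵢ−xⱼ) / ∏_{j≠i} ϑ(yᵢ−yⱼ) = 0`. -/
theorem four_term_theta_identity
    (τ : ℂ) (hτ : 0 < τ.im)
    (ϑ : ℂ → ℂ)
    (hϑ_hol : Differentiable ℂ ϑ)
    (hϑ_zero : ∀ z : ℂ, ϑ z = 0 ↔ z ∈ lattice τ)
    (hϑ_deriv : deriv ϑ 0 = 1)
    (hϑ_per1 : ∀ z : ℂ, ϑ (z + 1) = -ϑ z)
    (hϑ_odd : ∀ z : ℂ, ϑ (-z) = -ϑ z)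
    (hϑ_perτ : ∀ z : ℂ, ϑ (z + τ) =
      -Complex.exp (-(Real.pi : ℂ) * Complex.I * τ) *
        Complex.exp (-2 * (Real.pi : ℂ) * Complex.I * z) * ϑ z)
    (x y : Fin 4 → ℂ)
    (hsum : ∑ i, x i = ∑ i, y i)
    (hy : ∀ i j : Fin 4, i ≠ j → y i - y j ∉ lattice τ) :
    ∑ i : Fin 4, (∏ j : Fin 4, ϑ (y i - x j)) /
      (∏ j ∈ Finset.univ.erase i, ϑ (y i - y j)) = 0 := by
  have hϑ : IsThetaFunction τ 1 0 ϑ :=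
    ⟨fun z => by simpa using hϑ_per1 z, fun z => by simpa [thetaFactor] using hϑ_perτ z⟩
  have hsimple (l : ℂ) (hl : l ∈ lattice τ) : deriv ϑ l ≠ 0 :=
    deriv_ne_zero_of_mem_quasiPeriods hϑ_hol ((hϑ_zero 0).2 (zero_mem_lattice τ))
      (by simp [hϑ_deriv]) (hϑ.lattice_subset_quasiPeriods hl)
  simpa only [thetaSum, Multiset.map_map, Function.comp_def, Finset.prod_map_val] using
    thetaSum_eq_zero hτ hϑ_hol hϑ_zero hϑ hϑ_odd hsimple (fun i _ j _ => hy i j)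
      (S := Finset.univ) (X := Finset.univ.val.map x) (by simp) (by simp)
      (by rw [Finset.sum_map_val]; exact hsum)
end
end

section
/- The colored shuffle product is well defined and associative (rational-section form of Theorem 3.1, '(𝒮ℋ,⋆) is an algebra object'): with the fac data below and the shuffle product f₁⋆f₂ := (−1)^{(v₂, C̄v₁)} ∑_{σ ∈ Sh(v₁,v₂)} σ·( f₁(z_{A_o})·f₂(z_{B_o})·fac(z_{A_o}|z_{B_o}) ), where for a colored tuple of shape v₁+v₂, A_o consists of the first v₁(i) variables of each color i and B_o of the remaining v₂(i), and σ ∈ Sh(v₁,v₂) acts by permuting the variables of each color: (1) for f₁ ∈ SH_{v₁} and f₂ ∈ SH_{v₂}, the function f₁⋆f₂ lies in SH_{v₁+v₂} (it is symmetric within each color); (2) ⋆ is associative: (f₁⋆f₂)⋆f₃ = f₁⋆(f₂⋆f₃) for all f₁ ∈ SH_{v₁}, f₂ ∈ SH_{v₂}, f₃ ∈ SH_{v₃}. -/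
/-!
If `f₁` and `f₂` are symmetric, the summand `f₁(z_A) f₂(z_B) fac(z_A | z_B)` is invariant under
permuting the variables inside each block, and every colored permutation is uniquely a shuffle
followed by such a block permutation. So `f₁ ⋆ f₂` is, up to the factor `±1 / (|S_{v₁}| |S_{v₂}|)`,
the sum of the summand over *all* colored permutations, which is visibly symmetric.

Applying this twice, `(f₁ ⋆ f₂) ⋆ f₃` and `f₁ ⋆ (f₂ ⋆ f₃)` both become
`±1 / (|S_{v₁}| |S_{v₂}| |S_{v₃}|)` times the full symmetrization of
`f₁(z_A) f₂(z_B) f₃(z_C) fac(z_A|z_B) fac(z_A|z_C) fac(z_B|z_C)`: the inner symmetrization is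
absorbed by the outer one, and `fac` turns concatenation in either argument into a product.
The signs agree because the sign exponent is bilinear.
-/

noncomputable section

open Finset

/-- An `I`-colored tuple of complex variables of shape `v`. -/
def CTuple (I : Type*) (v : I → ℕ) : Type _ := (i : I) → Fin (v i) → ℂ

/-- Concatenation of colored tuples: the colored tuple `z ⊔ w` of shape `a + b`. -/
def cat {I : Type*} {a b : I → ℕ} (z : CTuple I a) (w : CTuple I b) :
    CTuple I (a + b) :=
  fun i => Fin.append (z i) (w i)

/-- The factor `fac(z_A | z_B) = fac₁(z_A|z_B) · fac₂(z_A|z_B)` attached to a quiver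
`Q = (I, H)` with source and target maps `out, inc : H → I`, integers `m₁ h = m_h`,
`m₂ h = m_{h*}`, parameters `t₁, t₂ ∈ ℂ`, and an arbitrary function `ϑ : ℂ → ℂ`
(division by zero is junk `0`). -/
def fac {I : Type*} [Fintype I] {H : Type*} [Fintype H]
    (ϑ : ℂ → ℂ) (t₁ t₂ : ℂ) (out inc : H → I) (m₁ m₂ : H → ℤ)
    {a b : I → ℕ} (zA : CTuple I a) (zB : CTuple I b) : ℂ :=
  (∏ α : I, ∏ s : Fin (a α), ∏ t : Fin (b α),
      ϑ (zA α s - zB α t + t₁ + t₂) / ϑ (zB α t - zA α s)) *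
  ∏ h : H,
    (∏ s : Fin (a (out h)), ∏ t : Fin (b (inc h)),
        ϑ (zB (inc h) t - zA (out h) s + (m₁ h : ℂ) * t₁)) *
    (∏ s : Fin (a (inc h)), ∏ t : Fin (b (out h)),
        ϑ (zB (out h) t - zA (inc h) s + (m₂ h : ℂ) * t₂))

/-- The `(k,l)` entry of the adjacency matrix `Ā` of the quiver. -/
def adjEntry {I : Type*} [DecidableEq I] {H : Type*} [Fintype H]
    (out inc : H → I) (k l : I) : ℕ :=
  (Finset.univ.filter (fun h : H => out h = k ∧ inc h = l)).card

/-- The sign exponent `(v₂, C̄ v₁) = ∑_{k,l} v₂(k)·(δ_{kl} − ā_{kl})·v₁(l)`. -/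
def signExp {I : Type*} [Fintype I] [DecidableEq I] {H : Type*} [Fintype H]
    (out inc : H → I) (v₂ v₁ : I → ℕ) : ℤ :=
  ∑ k : I, ∑ l : I,
    (v₂ k : ℤ) * ((if k = l then 1 else 0) - (adjEntry out inc k l : ℤ)) * (v₁ l : ℤ)

/-- A `(p,q)`-shuffle: a permutation of `Fin (p+q)` preserving the relative order of the
first `p` indices and of the last `q` indices. -/
def IsShuffle {p q : ℕ} (σ : Equiv.Perm (Fin (p + q))) : Prop :=
  StrictMono (fun i : Fin p => σ (Fin.castAdd q i)) ∧
  StrictMono (fun j : Fin q => σ (Fin.natAdd p j))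

open scoped Classical in
/-- The finite set of colored `(v₁,v₂)`-shuffles. -/
noncomputable def shuffles {I : Type*} [Fintype I] [DecidableEq I] (v₁ v₂ : I → ℕ) :
    Finset ((i : I) → Equiv.Perm (Fin (v₁ i + v₂ i))) :=
  Finset.univ.filter (fun σ => ∀ i : I, IsShuffle (σ i))

/-- First block (the first `v₁ i` variables of each color) of a colored tuple of shape
`v₁ + v₂`. -/
def firstBlock {I : Type*} {v₁ v₂ : I → ℕ} (z : CTuple I (v₁ + v₂)) : CTuple I v₁ :=
  fun i s => z i (Fin.castAdd (v₂ i) s)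

/-- Second block (the last `v₂ i` variables of each color) of a colored tuple of shape
`v₁ + v₂`. -/
def secondBlock {I : Type*} {v₁ v₂ : I → ℕ} (z : CTuple I (v₁ + v₂)) : CTuple I v₂ :=
  fun i t => z i (Fin.natAdd (v₁ i) t)

/-- The action of a colored permutation on a colored tuple. -/
def permuteTuple {I : Type*} {v : I → ℕ} (σ : (i : I) → Equiv.Perm (Fin (v i)))
    (z : CTuple I v) : CTuple I v :=
  fun i => z i ∘ σ i

/-- A function of a colored tuple is symmetric within each color. -/
def ColorSymm {I : Type*} {v : I → ℕ} (f : CTuple I v → ℂ) : Prop :=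
  ∀ (σ : (i : I) → Equiv.Perm (Fin (v i))) (z : CTuple I v), f (permuteTuple σ z) = f z

/-- The shuffle product
`f₁ ⋆ f₂ = (−1)^{(v₂,C̄v₁)} ∑_{σ ∈ Sh(v₁,v₂)} σ·( f₁(z_{A_o})·f₂(z_{B_o})·fac(z_{A_o}|z_{B_o}) )`. -/
noncomputable def shuffleMul {I : Type*} [Fintype I] [DecidableEq I]
    {H : Type*} [Fintype H]
    (ϑ : ℂ → ℂ) (t₁ t₂ : ℂ) (out inc : H → I) (m₁ m₂ : H → ℤ)
    {v₁ v₂ : I → ℕ} (f₁ : CTuple I v₁ → ℂ) (f₂ : CTuple I v₂ → ℂ) :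
    CTuple I (v₁ + v₂) → ℂ :=
  fun z =>
    (-1 : ℂ) ^ (signExp out inc v₂ v₁) *
      ∑ σ ∈ shuffles v₁ v₂,
        f₁ (firstBlock (permuteTuple σ z)) * f₂ (secondBlock (permuteTuple σ z)) *
          fac ϑ t₁ t₂ out inc m₁ m₂
            (firstBlock (permuteTuple σ z)) (secondBlock (permuteTuple σ z))

/-! ### Shuffles and block permutations of `Fin (p + q)` -/

namespace Fin

def blockPerm {p q : ℕ} (τ₁ : Equiv.Perm (Fin p)) (τ₂ : Equiv.Perm (Fin q)) :
    Equiv.Perm (Fin (p + q)) :=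
  finSumFinEquiv.permCongr (Equiv.sumCongr τ₁ τ₂)

variable {p q : ℕ}

@[simp] lemma blockPerm_castAdd (τ₁ : Equiv.Perm (Fin p)) (τ₂ : Equiv.Perm (Fin q)) (s : Fin p) :
    blockPerm τ₁ τ₂ (castAdd q s) = castAdd q (τ₁ s) := by
  simp [blockPerm, Equiv.permCongr_apply]

@[simp] lemma blockPerm_natAdd (τ₁ : Equiv.Perm (Fin p)) (τ₂ : Equiv.Perm (Fin q)) (t : Fin q) :
    blockPerm τ₁ τ₂ (natAdd p t) = natAdd p (τ₂ t) := by
  simp [blockPerm, Equiv.permCongr_apply]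

lemma blockPerm_inv (τ₁ : Equiv.Perm (Fin p)) (τ₂ : Equiv.Perm (Fin q)) :
    (blockPerm τ₁ τ₂)⁻¹ = blockPerm τ₁⁻¹ τ₂⁻¹ := by
  rw [inv_eq_iff_mul_eq_one]
  ext x
  induction x using Fin.addCases <;> simp

end Fin

open Fin (blockPerm)

lemma Equiv.Perm.eq_of_strictMono_comp_eq {n : ℕ} {α : Type*} [LinearOrder α]
    {a b : Fin n → α} (ha : StrictMono a) (hb : StrictMono b) {τ τ' : Equiv.Perm (Fin n)}
    (h : a ∘ τ = b ∘ τ') : τ = τ' := by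
  have hinj : Function.Injective (a ∘ τ) := ha.injective.comp τ.injective
  have hτ : (a ∘ τ) ∘ ⇑τ⁻¹ = a := by ext; simp
  have hτ' : (a ∘ τ) ∘ ⇑τ'⁻¹ = b := by rw [h]; ext; simp
  have := Tuple.unique_monotone (hτ ▸ ha.monotone) (hτ' ▸ hb.monotone)
  exact inv_injective (Equiv.ext fun x => hinj (congrFun this x))

lemma IsShuffle.eq_of_mul_blockPerm_eq {p q : ℕ} {π π' : Equiv.Perm (Fin (p + q))}
    {τ₁ τ₁' : Equiv.Perm (Fin p)} {τ₂ τ₂' : Equiv.Perm (Fin q)}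
    (hπ : IsShuffle π) (hπ' : IsShuffle π')
    (h : π * blockPerm τ₁ τ₂ = π' * blockPerm τ₁' τ₂') :
    π = π' ∧ τ₁ = τ₁' ∧ τ₂ = τ₂' := by
  have h₁ : τ₁ = τ₁' := Equiv.Perm.eq_of_strictMono_comp_eq hπ.1 hπ'.1 <| funext fun s => by
    simpa using congrArg (· (Fin.castAdd q s)) h
  have h₂ : τ₂ = τ₂' := Equiv.Perm.eq_of_strictMono_comp_eq hπ.2 hπ'.2 <| funext fun t => by
    simpa using congrArg (· (Fin.natAdd p t)) h
  subst h₁ h₂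
  exact ⟨mul_right_cancel h, rfl, rfl⟩

lemma exists_isShuffle_mul_blockPerm {p q : ℕ} (σ : Equiv.Perm (Fin (p + q))) :
    ∃ (π : Equiv.Perm (Fin (p + q))) (τ₁ : Equiv.Perm (Fin p)) (τ₂ : Equiv.Perm (Fin q)),
      IsShuffle π ∧ π * blockPerm τ₁ τ₂ = σ := by
  have sorted {n : ℕ} (f : Fin n → Fin (p + q)) (hf : Function.Injective f) :
      StrictMono (f ∘ Tuple.sort f) :=
    (Tuple.monotone_sort f).strictMono_of_injective (hf.comp (Equiv.injective _))
  set τ₁ := Tuple.sort fun s => σ (Fin.castAdd q s)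
  set τ₂ := Tuple.sort fun t => σ (Fin.natAdd p t)
  refine ⟨σ * blockPerm τ₁ τ₂, τ₁⁻¹, τ₂⁻¹, ⟨?_, ?_⟩, ?_⟩
  · simpa [Function.comp_def] using
      sorted (fun s => σ (Fin.castAdd q s)) (σ.injective.comp (Fin.castAdd_injective p q))
  · simpa [Function.comp_def] using
      sorted (fun t => σ (Fin.natAdd p t)) (σ.injective.comp (Fin.natAdd_injective q p))
  · rw [mul_assoc, ← Fin.blockPerm_inv, mul_inv_cancel, mul_one]

section Colored

variable {I : Type*}

abbrev ColorPerm (I : Type*) (v : I → ℕ) : Type _ := (i : I) → Equiv.Perm (Fin (v i))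

lemma firstBlock_permuteTuple_blockPerm {v₁ v₂ : I → ℕ} (τ₁ : ColorPerm I v₁)
    (τ₂ : ColorPerm I v₂) (z : CTuple I (v₁ + v₂)) :
    firstBlock (permuteTuple (fun i => blockPerm (τ₁ i) (τ₂ i)) z)
      = permuteTuple τ₁ (firstBlock z) := by
  funext i s
  simp [firstBlock, permuteTuple]

lemma secondBlock_permuteTuple_blockPerm {v₁ v₂ : I → ℕ} (τ₁ : ColorPerm I v₁)
    (τ₂ : ColorPerm I v₂) (z : CTuple I (v₁ + v₂)) :
    secondBlock (permuteTuple (fun i => blockPerm (τ₁ i) (τ₂ i)) z)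
      = permuteTuple τ₂ (secondBlock z) := by
  funext i t
  simp [secondBlock, permuteTuple]

def shuffleBlockEquiv (v₁ v₂ : I → ℕ) :
    {π : ColorPerm I (v₁ + v₂) // ∀ i, IsShuffle (π i)} × ColorPerm I v₁ × ColorPerm I v₂ ≃
      ColorPerm I (v₁ + v₂) :=
  Equiv.ofBijective (fun x i => x.1.1 i * blockPerm (x.2.1 i) (x.2.2 i)) <| by
    constructor
    · rintro ⟨⟨π, hπ⟩, τ₁, τ₂⟩ ⟨⟨π', hπ'⟩, τ₁', τ₂'⟩ h
      have := fun i => (hπ i).eq_of_mul_blockPerm_eq (hπ' i) (congrFun h i)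
      simp only [Prod.mk.injEq, Subtype.mk.injEq]
      exact ⟨funext fun i => (this i).1, funext fun i => (this i).2.1,
        funext fun i => (this i).2.2⟩
    · intro σ
      choose π τ₁ τ₂ hπ hσ using fun i => exists_isShuffle_mul_blockPerm (σ i)
      exact ⟨(⟨π, hπ⟩, τ₁, τ₂), funext hσ⟩

def recast {v w : I → ℕ} (h : ∀ i, v i = w i) (z : CTuple I v) : CTuple I w :=
  fun i => z i ∘ Fin.cast (h i).symm

section Assoc

variable {v₁ v₂ v₃ : I → ℕ} (z : CTuple I (v₁ + v₂ + v₃))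

local notation "assoc" => fun i => Nat.add_assoc (v₁ i) (v₂ i) (v₃ i)

lemma firstBlock_recast_assoc :
    firstBlock (v₂ := v₂ + v₃) (recast assoc z) = firstBlock (firstBlock z) := by
  funext i s
  simp only [firstBlock, recast, Function.comp_apply]
  congr 1

lemma firstBlock_secondBlock_recast_assoc :
    firstBlock (secondBlock (v₁ := v₁) (v₂ := v₂ + v₃) (recast assoc z))
      = secondBlock (firstBlock z) := by
  funext i s
  simp only [firstBlock, secondBlock, recast, Function.comp_apply]
  congr 1

lemma secondBlock_secondBlock_recast_assoc :
    secondBlock (secondBlock (v₁ := v₁) (v₂ := v₂ + v₃) (recast assoc z)) = secondBlock z := by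
  funext i s
  simp only [secondBlock, recast, Function.comp_apply]
  congr 1
  ext
  simp [Nat.add_assoc]

end Assoc

/-! ### The factor `fac` and the unsymmetrized product -/

section Fac

variable [Fintype I] {H : Type*} [Fintype H]
  {ϑ : ℂ → ℂ} {t₁ t₂ : ℂ} {out inc : H → I} {m₁ m₂ : H → ℤ}

def pairProd {m n : ℕ} (G : ℂ → ℂ → ℂ) (x : Fin m → ℂ) (y : Fin n → ℂ) : ℂ :=
  ∏ s, ∏ t, G (x s) (y t)

lemma pairProd_comp_perm {m n : ℕ} (G : ℂ → ℂ → ℂ) (x : Fin m → ℂ) (y : Fin n → ℂ)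
    (e : Equiv.Perm (Fin m)) (e' : Equiv.Perm (Fin n)) :
    pairProd G (x ∘ e) (y ∘ e') = pairProd G x y :=
  (Equiv.prod_comp e fun s => ∏ t, G (x s) (y (e' t))).trans <|
    prod_congr rfl fun s _ => Equiv.prod_comp e' fun t => G (x s) (y t)

lemma fac_eq_pairProd {a b : I → ℕ} (zA : CTuple I a) (zB : CTuple I b) :
    fac ϑ t₁ t₂ out inc m₁ m₂ zA zB
      = (∏ α, pairProd (fun x y => ϑ (x - y + t₁ + t₂) / ϑ (y - x)) (zA α) (zB α)) *
        ∏ h, pairProd (fun x y => ϑ (y - x + m₁ h * t₁)) (zA (out h)) (zB (inc h)) *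
          pairProd (fun x y => ϑ (y - x + m₂ h * t₂)) (zA (inc h)) (zB (out h)) := rfl

lemma fac_permuteTuple {a b : I → ℕ} (τA : ColorPerm I a) (τB : ColorPerm I b)
    (zA : CTuple I a) (zB : CTuple I b) :
    fac ϑ t₁ t₂ out inc m₁ m₂ (permuteTuple τA zA) (permuteTuple τB zB)
      = fac ϑ t₁ t₂ out inc m₁ m₂ zA zB := by
  simp only [fac_eq_pairProd, permuteTuple, pairProd_comp_perm]

lemma fac_split_left {a b c : I → ℕ} (w : CTuple I (a + b)) (zC : CTuple I c) :
    fac ϑ t₁ t₂ out inc m₁ m₂ w zC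
      = fac ϑ t₁ t₂ out inc m₁ m₂ (firstBlock w) zC *
        fac ϑ t₁ t₂ out inc m₁ m₂ (secondBlock w) zC := by
  simp only [fac, firstBlock, secondBlock, Pi.add_apply, Fin.prod_univ_add, prod_mul_distrib]
  ring

lemma fac_split_right {a b c : I → ℕ} (zA : CTuple I a) (w : CTuple I (b + c)) :
    fac ϑ t₁ t₂ out inc m₁ m₂ zA w
      = fac ϑ t₁ t₂ out inc m₁ m₂ zA (firstBlock w) *
        fac ϑ t₁ t₂ out inc m₁ m₂ zA (secondBlock w) := by
  simp only [fac, firstBlock, secondBlock, Pi.add_apply, Fin.prod_univ_add, prod_mul_distrib]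
  ring

variable (ϑ t₁ t₂ out inc m₁ m₂) in
def shuffleTerm {v₁ v₂ : I → ℕ} (f₁ : CTuple I v₁ → ℂ) (f₂ : CTuple I v₂ → ℂ) :
    CTuple I (v₁ + v₂) → ℂ :=
  fun z => f₁ (firstBlock z) * f₂ (secondBlock z) *
    fac ϑ t₁ t₂ out inc m₁ m₂ (firstBlock z) (secondBlock z)

variable {v₁ v₂ v₃ : I → ℕ}

lemma shuffleTerm_smul_left (c : ℂ) (f₁ : CTuple I v₁ → ℂ) (f₂ : CTuple I v₂ → ℂ) :
    shuffleTerm ϑ t₁ t₂ out inc m₁ m₂ (c • f₁) f₂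
      = c • shuffleTerm ϑ t₁ t₂ out inc m₁ m₂ f₁ f₂ := by
  funext z
  simp only [shuffleTerm, Pi.smul_apply, smul_eq_mul]
  ring

lemma shuffleTerm_smul_right (c : ℂ) (f₁ : CTuple I v₁ → ℂ) (f₂ : CTuple I v₂ → ℂ) :
    shuffleTerm ϑ t₁ t₂ out inc m₁ m₂ f₁ (c • f₂)
      = c • shuffleTerm ϑ t₁ t₂ out inc m₁ m₂ f₁ f₂ := by
  funext z
  simp only [shuffleTerm, Pi.smul_apply, smul_eq_mul]
  ring

lemma shuffleTerm_permuteTuple_blockPerm {f₁ : CTuple I v₁ → ℂ} {f₂ : CTuple I v₂ → ℂ}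
    (hf₁ : ColorSymm f₁) (hf₂ : ColorSymm f₂) (τ₁ : ColorPerm I v₁) (τ₂ : ColorPerm I v₂)
    (z : CTuple I (v₁ + v₂)) :
    shuffleTerm ϑ t₁ t₂ out inc m₁ m₂ f₁ f₂ (permuteTuple (fun i => blockPerm (τ₁ i) (τ₂ i)) z)
      = shuffleTerm ϑ t₁ t₂ out inc m₁ m₂ f₁ f₂ z := by
  simp only [shuffleTerm, firstBlock_permuteTuple_blockPerm, secondBlock_permuteTuple_blockPerm,
    hf₁ τ₁, hf₂ τ₂, fac_permuteTuple]

lemma shuffleTerm_assoc (f₁ : CTuple I v₁ → ℂ) (f₂ : CTuple I v₂ → ℂ) (f₃ : CTuple I v₃ → ℂ)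
    (z : CTuple I (v₁ + v₂ + v₃)) :
    shuffleTerm ϑ t₁ t₂ out inc m₁ m₂ (shuffleTerm ϑ t₁ t₂ out inc m₁ m₂ f₁ f₂) f₃ z
      = shuffleTerm ϑ t₁ t₂ out inc m₁ m₂ f₁ (shuffleTerm ϑ t₁ t₂ out inc m₁ m₂ f₂ f₃)
          (recast (fun i => Nat.add_assoc (v₁ i) (v₂ i) (v₃ i)) z) := by
  simp only [shuffleTerm, fac_split_left (firstBlock z), fac_split_right _ (secondBlock _),
    firstBlock_recast_assoc, firstBlock_secondBlock_recast_assoc,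
    secondBlock_secondBlock_recast_assoc]
  ring

end Fac

/-! ### Symmetrization over all colored permutations -/

section Symmetrize

variable [Fintype I] [DecidableEq I]

def symmetrize {v : I → ℕ} (F : CTuple I v → ℂ) : CTuple I v → ℂ :=
  fun z => ∑ σ : ColorPerm I v, F (permuteTuple σ z)

variable {v : I → ℕ}

lemma colorSymm_symmetrize (F : CTuple I v → ℂ) : ColorSymm (symmetrize F) := fun ρ z =>
  Equiv.sum_comp (Equiv.mulLeft ρ) fun σ => F (permuteTuple σ z)

lemma sum_permuteTuple_permuteTuple (F : CTuple I v → ℂ) (ρ : ColorPerm I v) (z : CTuple I v) :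
    ∑ σ : ColorPerm I v, F (permuteTuple ρ (permuteTuple σ z)) = symmetrize F z :=
  Equiv.sum_comp (Equiv.mulRight ρ) fun σ => F (permuteTuple σ z)

lemma symmetrize_smul (c : ℂ) (F : CTuple I v → ℂ) : symmetrize (c • F) = c • symmetrize F := by
  funext z
  simp [symmetrize, mul_sum]

lemma symmetrize_recast {w : I → ℕ} (h : ∀ i, v i = w i) (F : CTuple I w → ℂ) (z : CTuple I v) :
    symmetrize F (recast h z) = symmetrize (F ∘ recast h) z := by
  refine (Equiv.sum_comp (Equiv.piCongrRight fun i => (finCongr (h i)).permCongr) _).symm.trans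
    (sum_congr rfl fun σ _ => congrArg F ?_)
  funext i x
  simp [permuteTuple, recast, Equiv.permCongr_apply]

lemma symmetrize_eq_card_mul_sum_shuffles {v₁ v₂ : I → ℕ} (F : CTuple I (v₁ + v₂) → ℂ)
    (hF : ∀ (τ₁ : ColorPerm I v₁) (τ₂ : ColorPerm I v₂) z,
      F (permuteTuple (fun i => blockPerm (τ₁ i) (τ₂ i)) z) = F z)
    (z : CTuple I (v₁ + v₂)) :
    symmetrize F z = (Fintype.card (ColorPerm I v₁) * Fintype.card (ColorPerm I v₂) : ℂ) *
      ∑ σ ∈ shuffles v₁ v₂, F (permuteTuple σ z) := by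
  classical
  calc symmetrize F z
      = ∑ x, F (permuteTuple (shuffleBlockEquiv v₁ v₂ x) z) := (Equiv.sum_comp _ _).symm
    _ = ∑ x : {π // ∀ i, IsShuffle (π i)} × _, F (permuteTuple x.1.1 z) :=
        sum_congr rfl fun x _ => hF x.2.1 x.2.2 (permuteTuple x.1.1 z)
    _ = _ := by
        simp only [Fintype.sum_prod_type, Finset.sum_const, card_univ, nsmul_eq_mul, ← mul_sum]
        rw [Fintype.card_prod, Nat.cast_mul]
        exact congrArg _ (sum_subtype (shuffles v₁ v₂) (fun σ => by simp [shuffles])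
          fun σ => F (permuteTuple σ z)).symm

end Symmetrize

/-! ### The shuffle product -/

section ShuffleMul

variable [Fintype I] [DecidableEq I] {H : Type*} [Fintype H]
  {ϑ : ℂ → ℂ} {t₁ t₂ : ℂ} {out inc : H → I} {m₁ m₂ : H → ℤ} {v₁ v₂ v₃ : I → ℕ}

lemma shuffleTerm_symmetrize_left (F : CTuple I v₁ → ℂ) (g : CTuple I v₂ → ℂ)
    (z : CTuple I (v₁ + v₂)) :
    shuffleTerm ϑ t₁ t₂ out inc m₁ m₂ (symmetrize F) g z
      = ∑ τ : ColorPerm I v₁,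
          shuffleTerm ϑ t₁ t₂ out inc m₁ m₂ F g (permuteTuple (fun i => blockPerm (τ i) 1) z) := by
  simp only [shuffleTerm, symmetrize, sum_mul, firstBlock_permuteTuple_blockPerm,
    secondBlock_permuteTuple_blockPerm]
  exact sum_congr rfl fun τ _ => by rw [fac_permuteTuple τ fun _ => 1]; rfl

lemma shuffleTerm_symmetrize_right (f : CTuple I v₁ → ℂ) (G : CTuple I v₂ → ℂ)
    (z : CTuple I (v₁ + v₂)) :
    shuffleTerm ϑ t₁ t₂ out inc m₁ m₂ f (symmetrize G) z
      = ∑ τ : ColorPerm I v₂,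
          shuffleTerm ϑ t₁ t₂ out inc m₁ m₂ f G (permuteTuple (fun i => blockPerm 1 (τ i)) z) := by
  simp only [shuffleTerm, symmetrize, mul_sum, sum_mul, firstBlock_permuteTuple_blockPerm,
    secondBlock_permuteTuple_blockPerm]
  exact sum_congr rfl fun τ _ => by rw [fac_permuteTuple (fun _ => 1) τ]; rfl

lemma symmetrize_shuffleTerm_symmetrize_left (F : CTuple I v₁ → ℂ) (g : CTuple I v₂ → ℂ) :
    symmetrize (shuffleTerm ϑ t₁ t₂ out inc m₁ m₂ (symmetrize F) g)
      = (Fintype.card (ColorPerm I v₁) : ℂ) •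
          symmetrize (shuffleTerm ϑ t₁ t₂ out inc m₁ m₂ F g) := by
  funext z
  rw [symmetrize]
  simp only [shuffleTerm_symmetrize_left]
  rw [sum_comm]
  simp [sum_permuteTuple_permuteTuple]

lemma symmetrize_shuffleTerm_symmetrize_right (f : CTuple I v₁ → ℂ) (G : CTuple I v₂ → ℂ) :
    symmetrize (shuffleTerm ϑ t₁ t₂ out inc m₁ m₂ f (symmetrize G))
      = (Fintype.card (ColorPerm I v₂) : ℂ) •
          symmetrize (shuffleTerm ϑ t₁ t₂ out inc m₁ m₂ f G) := by
  funext z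
  rw [symmetrize]
  simp only [shuffleTerm_symmetrize_right]
  rw [sum_comm]
  simp [sum_permuteTuple_permuteTuple]

lemma signExp_add_left (a b c : I → ℕ) :
    signExp out inc (a + b) c = signExp out inc a c + signExp out inc b c := by
  simp only [signExp, Pi.add_apply, Nat.cast_add, ← sum_add_distrib]
  exact sum_congr rfl fun k _ => sum_congr rfl fun l _ => by ring

lemma signExp_add_right (a b c : I → ℕ) :
    signExp out inc a (b + c) = signExp out inc a b + signExp out inc a c := by
  simp only [signExp, Pi.add_apply, Nat.cast_add, ← sum_add_distrib]
  exact sum_congr rfl fun k _ => sum_congr rfl fun l _ => by ring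

lemma shuffleMul_eq_sum_shuffleTerm (f₁ : CTuple I v₁ → ℂ) (f₂ : CTuple I v₂ → ℂ)
    (z : CTuple I (v₁ + v₂)) :
    shuffleMul ϑ t₁ t₂ out inc m₁ m₂ f₁ f₂ z = (-1 : ℂ) ^ signExp out inc v₂ v₁ *
      ∑ σ ∈ shuffles v₁ v₂, shuffleTerm ϑ t₁ t₂ out inc m₁ m₂ f₁ f₂ (permuteTuple σ z) := rfl

lemma shuffleMul_eq_smul_symmetrize {f₁ : CTuple I v₁ → ℂ} {f₂ : CTuple I v₂ → ℂ}
    (hf₁ : ColorSymm f₁) (hf₂ : ColorSymm f₂) :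
    shuffleMul ϑ t₁ t₂ out inc m₁ m₂ f₁ f₂
      = ((-1 : ℂ) ^ signExp out inc v₂ v₁ /
          (Fintype.card (ColorPerm I v₁) * Fintype.card (ColorPerm I v₂))) •
        symmetrize (shuffleTerm ϑ t₁ t₂ out inc m₁ m₂ f₁ f₂) := by
  funext z
  have hN : (Fintype.card (ColorPerm I v₁) * Fintype.card (ColorPerm I v₂) : ℂ) ≠ 0 :=
    mul_ne_zero (Nat.cast_ne_zero.2 Fintype.card_ne_zero) (Nat.cast_ne_zero.2 Fintype.card_ne_zero)
  rw [Pi.smul_apply, smul_eq_mul,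
    symmetrize_eq_card_mul_sum_shuffles _ (shuffleTerm_permuteTuple_blockPerm hf₁ hf₂),
    shuffleMul_eq_sum_shuffleTerm, div_mul_eq_mul_div, eq_div_iff hN]
  ring

lemma colorSymm_shuffleMul {f₁ : CTuple I v₁ → ℂ} {f₂ : CTuple I v₂ → ℂ}
    (hf₁ : ColorSymm f₁) (hf₂ : ColorSymm f₂) :
    ColorSymm (shuffleMul ϑ t₁ t₂ out inc m₁ m₂ f₁ f₂) := fun σ z => by
  rw [shuffleMul_eq_smul_symmetrize hf₁ hf₂, Pi.smul_apply, Pi.smul_apply,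
    colorSymm_symmetrize _ σ z]

lemma shuffleMul_shuffleMul_left {f₁ : CTuple I v₁ → ℂ} {f₂ : CTuple I v₂ → ℂ}
    {f₃ : CTuple I v₃ → ℂ} (hf₁ : ColorSymm f₁) (hf₂ : ColorSymm f₂) (hf₃ : ColorSymm f₃) :
    shuffleMul ϑ t₁ t₂ out inc m₁ m₂ (shuffleMul ϑ t₁ t₂ out inc m₁ m₂ f₁ f₂) f₃
      = ((-1 : ℂ) ^ (signExp out inc v₂ v₁ + signExp out inc v₃ (v₁ + v₂)) /
          (Fintype.card (ColorPerm I v₁) * Fintype.card (ColorPerm I v₂) *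
            Fintype.card (ColorPerm I v₃))) •
        symmetrize (shuffleTerm ϑ t₁ t₂ out inc m₁ m₂
          (shuffleTerm ϑ t₁ t₂ out inc m₁ m₂ f₁ f₂) f₃) := by
  rw [shuffleMul_eq_smul_symmetrize (colorSymm_shuffleMul hf₁ hf₂) hf₃,
    shuffleMul_eq_smul_symmetrize hf₁ hf₂, shuffleTerm_smul_left, symmetrize_smul,
    symmetrize_shuffleTerm_symmetrize_left, smul_smul, smul_smul, zpow_add₀ (by norm_num)]
  have : (Fintype.card (ColorPerm I (v₁ + v₂)) : ℂ) ≠ 0 := Nat.cast_ne_zero.2 Fintype.card_ne_zero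
  field_simp

lemma shuffleMul_shuffleMul_right {f₁ : CTuple I v₁ → ℂ} {f₂ : CTuple I v₂ → ℂ}
    {f₃ : CTuple I v₃ → ℂ} (hf₁ : ColorSymm f₁) (hf₂ : ColorSymm f₂) (hf₃ : ColorSymm f₃) :
    shuffleMul ϑ t₁ t₂ out inc m₁ m₂ f₁ (shuffleMul ϑ t₁ t₂ out inc m₁ m₂ f₂ f₃)
      = ((-1 : ℂ) ^ (signExp out inc v₃ v₂ + signExp out inc (v₂ + v₃) v₁) /
          (Fintype.card (ColorPerm I v₁) * Fintype.card (ColorPerm I v₂) *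
            Fintype.card (ColorPerm I v₃))) •
        symmetrize (shuffleTerm ϑ t₁ t₂ out inc m₁ m₂ f₁
          (shuffleTerm ϑ t₁ t₂ out inc m₁ m₂ f₂ f₃)) := by
  rw [shuffleMul_eq_smul_symmetrize hf₁ (colorSymm_shuffleMul hf₂ hf₃),
    shuffleMul_eq_smul_symmetrize hf₂ hf₃, shuffleTerm_smul_right, symmetrize_smul,
    symmetrize_shuffleTerm_symmetrize_right, smul_smul, smul_smul, zpow_add₀ (by norm_num)]
  have : (Fintype.card (ColorPerm I (v₂ + v₃)) : ℂ) ≠ 0 := Nat.cast_ne_zero.2 Fintype.card_ne_zero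
  field_simp

lemma shuffleMul_assoc {f₁ : CTuple I v₁ → ℂ} {f₂ : CTuple I v₂ → ℂ}
    {f₃ : CTuple I v₃ → ℂ} (hf₁ : ColorSymm f₁) (hf₂ : ColorSymm f₂) (hf₃ : ColorSymm f₃)
    (z : CTuple I (v₁ + v₂ + v₃)) :
    shuffleMul ϑ t₁ t₂ out inc m₁ m₂ (shuffleMul ϑ t₁ t₂ out inc m₁ m₂ f₁ f₂) f₃ z
      = shuffleMul ϑ t₁ t₂ out inc m₁ m₂ f₁ (shuffleMul ϑ t₁ t₂ out inc m₁ m₂ f₂ f₃)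
          (recast (fun i => Nat.add_assoc (v₁ i) (v₂ i) (v₃ i)) z) := by
  have hsign : signExp out inc v₂ v₁ + signExp out inc v₃ (v₁ + v₂)
      = signExp out inc v₃ v₂ + signExp out inc (v₂ + v₃) v₁ := by
    rw [signExp_add_left, signExp_add_right]
    ring
  rw [shuffleMul_shuffleMul_left hf₁ hf₂ hf₃, shuffleMul_shuffleMul_right hf₁ hf₂ hf₃,
    Pi.smul_apply, Pi.smul_apply, symmetrize_recast, hsign]
  congr 3
  exact funext (shuffleTerm_assoc f₁ f₂ f₃)

end ShuffleMul

end Colored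

/-- The colored shuffle product is well defined on symmetric functions and associative
(rational-section form of Theorem 3.1: `(𝒮ℋ, ⋆)` is an algebra object). -/
theorem shuffle_algebra {I : Type*} [Fintype I] [DecidableEq I] {H : Type*} [Fintype H]
    (ϑ : ℂ → ℂ) (t₁ t₂ : ℂ) (out inc : H → I) (m₁ m₂ : H → ℤ) :
    (∀ (v₁ v₂ : I → ℕ) (f₁ : CTuple I v₁ → ℂ) (f₂ : CTuple I v₂ → ℂ),
      ColorSymm f₁ → ColorSymm f₂ →
      ColorSymm (shuffleMul ϑ t₁ t₂ out inc m₁ m₂ f₁ f₂)) ∧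
    (∀ (v₁ v₂ v₃ : I → ℕ) (f₁ : CTuple I v₁ → ℂ) (f₂ : CTuple I v₂ → ℂ)
        (f₃ : CTuple I v₃ → ℂ),
      ColorSymm f₁ → ColorSymm f₂ → ColorSymm f₃ →
      ∀ z : CTuple I (v₁ + v₂ + v₃),
        shuffleMul ϑ t₁ t₂ out inc m₁ m₂ (shuffleMul ϑ t₁ t₂ out inc m₁ m₂ f₁ f₂) f₃ z =
        shuffleMul ϑ t₁ t₂ out inc m₁ m₂ f₁ (shuffleMul ϑ t₁ t₂ out inc m₁ m₂ f₂ f₃)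
          (fun i => z i ∘ Fin.cast (Nat.add_assoc (v₁ i) (v₂ i) (v₃ i)).symm)) :=
  ⟨fun _ _ _ _ => colorSymm_shuffleMul, fun _ _ _ _ _ _ => shuffleMul_assoc⟩
end
end

section
/- Key identity in the proof that Δ is an algebra homomorphism (bialgebra compatibility, Theorem 3.6): with the fac data below, let A₁, A₂, B₁, B₂ be pairwise disjoint I-colored index sets with attached complex variables, and assume the five quantities fac(z_{A₁}|z_{B₂}), fac(z_{A₂}|z_{B₁}), fac(z_{B₂}|z_{A₁}), fac(z_{A₂}|z_{A₁}), fac(z_{B₂}|z_{B₁}) are all nonzero. Then [ fac(z_{B₂}|z_{A₁}) / fac(z_{A₁}|z_{B₂}) ] · fac(z_{A₁⊔A₂}|z_{B₁⊔B₂}) / fac(z_{A₂⊔B₂}|z_{A₁⊔B₁}) = fac(z_{A₁}|z_{B₁}) · fac(z_{A₂}|z_{B₂}) / ( fac(z_{A₂}|z_{A₁}) · fac(z_{B₂}|z_{B₁}) ). -/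
/-!
Since `fac` is multiplicative in each argument under concatenation, both factors on the left
split into four `fac`s of the blocks. The braiding prefactor cancels `fac(z_{B₂}|z_{A₁})` in the
denominator, and `fac(z_{A₁}|z_{B₂})`, `fac(z_{A₂}|z_{B₁})` cancel between numerator and
denominator; what remains is the right-hand side.
-/

noncomputable section

open Finset

section FacCat

variable {I : Type*} [Fintype I] {H : Type*} [Fintype H]
  (ϑ : ℂ → ℂ) (t₁ t₂ : ℂ) (out inc : H → I) (m₁ m₂ : H → ℤ)

lemma fac_cat_left {a a' b : I → ℕ} (zA : CTuple I a) (zA' : CTuple I a') (zB : CTuple I b) :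
    fac ϑ t₁ t₂ out inc m₁ m₂ (cat zA zA') zB
      = fac ϑ t₁ t₂ out inc m₁ m₂ zA zB * fac ϑ t₁ t₂ out inc m₁ m₂ zA' zB := by
  simp only [fac, cat, Pi.add_apply, Fin.prod_univ_add, Fin.append_left, Fin.append_right,
    prod_mul_distrib]
  ring

lemma fac_cat_right {a b b' : I → ℕ} (zA : CTuple I a) (zB : CTuple I b) (zB' : CTuple I b') :
    fac ϑ t₁ t₂ out inc m₁ m₂ zA (cat zB zB')
      = fac ϑ t₁ t₂ out inc m₁ m₂ zA zB * fac ϑ t₁ t₂ out inc m₁ m₂ zA zB' := by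
  simp only [fac, cat, Pi.add_apply, Fin.prod_univ_add, Fin.append_left, Fin.append_right,
    prod_mul_distrib]
  ring

lemma fac_cat_cat {a a' b b' : I → ℕ} (zA : CTuple I a) (zA' : CTuple I a')
    (zB : CTuple I b) (zB' : CTuple I b') :
    fac ϑ t₁ t₂ out inc m₁ m₂ (cat zA zA') (cat zB zB')
      = fac ϑ t₁ t₂ out inc m₁ m₂ zA zB * fac ϑ t₁ t₂ out inc m₁ m₂ zA zB'
        * fac ϑ t₁ t₂ out inc m₁ m₂ zA' zB * fac ϑ t₁ t₂ out inc m₁ m₂ zA' zB' := by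
  rw [fac_cat_left, fac_cat_right, fac_cat_right, ← mul_assoc]

end FacCat

lemma div_mul_div_cancel_three {K : Type*} [Field K] {x y z : K} (p q w v : K)
    (hx : x ≠ 0) (hy : y ≠ 0) (hz : z ≠ 0) :
    z / x * (p * x * y * q) / (w * y * z * v) = p * q / (w * v) := by
  rw [div_mul_eq_mul_div, div_div, show z * (p * x * y * q) = p * q * (x * y * z) by ring,
    show x * (w * y * z * v) = w * v * (x * y * z) by ring,
    mul_div_mul_right _ _ (mul_ne_zero (mul_ne_zero hx hy) hz)]

theorem fac_bialgebra_key_general {I : Type*} [Fintype I] {H : Type*} [Fintype H]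
    (ϑ : ℂ → ℂ) (t₁ t₂ : ℂ) (out inc : H → I) (m₁ m₂ : H → ℤ)
    {a₁ a₂ b₁ b₂ : I → ℕ}
    (zA₁ : CTuple I a₁) (zA₂ : CTuple I a₂) (zB₁ : CTuple I b₁) (zB₂ : CTuple I b₂)
    (h1 : fac ϑ t₁ t₂ out inc m₁ m₂ zA₁ zB₂ ≠ 0)
    (h2 : fac ϑ t₁ t₂ out inc m₁ m₂ zA₂ zB₁ ≠ 0)
    (h3 : fac ϑ t₁ t₂ out inc m₁ m₂ zB₂ zA₁ ≠ 0) :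
    (fac ϑ t₁ t₂ out inc m₁ m₂ zB₂ zA₁ / fac ϑ t₁ t₂ out inc m₁ m₂ zA₁ zB₂) *
        fac ϑ t₁ t₂ out inc m₁ m₂ (cat zA₁ zA₂) (cat zB₁ zB₂) /
        fac ϑ t₁ t₂ out inc m₁ m₂ (cat zA₂ zB₂) (cat zA₁ zB₁)
      = fac ϑ t₁ t₂ out inc m₁ m₂ zA₁ zB₁ * fac ϑ t₁ t₂ out inc m₁ m₂ zA₂ zB₂ /
          (fac ϑ t₁ t₂ out inc m₁ m₂ zA₂ zA₁ * fac ϑ t₁ t₂ out inc m₁ m₂ zB₂ zB₁) := by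
  rw [fac_cat_cat, fac_cat_cat]
  exact div_mul_div_cancel_three _ _ _ _ h1 h2 h3

/-- Key identity in the proof that `Δ` is an algebra homomorphism (Theorem 3.6):
`[fac(z_{B₂}|z_{A₁})/fac(z_{A₁}|z_{B₂})] · fac(z_{A₁⊔A₂}|z_{B₁⊔B₂}) / fac(z_{A₂⊔B₂}|z_{A₁⊔B₁})
 = fac(z_{A₁}|z_{B₁}) · fac(z_{A₂}|z_{B₂}) / (fac(z_{A₂}|z_{A₁}) · fac(z_{B₂}|z_{B₁}))`. -/
theorem fac_bialgebra_key {I : Type*} [Fintype I] {H : Type*} [Fintype H]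
    (ϑ : ℂ → ℂ) (t₁ t₂ : ℂ) (out inc : H → I) (m₁ m₂ : H → ℤ)
    {a₁ a₂ b₁ b₂ : I → ℕ}
    (zA₁ : CTuple I a₁) (zA₂ : CTuple I a₂) (zB₁ : CTuple I b₁) (zB₂ : CTuple I b₂)
    (h1 : fac ϑ t₁ t₂ out inc m₁ m₂ zA₁ zB₂ ≠ 0)
    (h2 : fac ϑ t₁ t₂ out inc m₁ m₂ zA₂ zB₁ ≠ 0)
    (h3 : fac ϑ t₁ t₂ out inc m₁ m₂ zB₂ zA₁ ≠ 0)
    (h4 : fac ϑ t₁ t₂ out inc m₁ m₂ zA₂ zA₁ ≠ 0)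
    (h5 : fac ϑ t₁ t₂ out inc m₁ m₂ zB₂ zB₁ ≠ 0) :
    (fac ϑ t₁ t₂ out inc m₁ m₂ zB₂ zA₁ / fac ϑ t₁ t₂ out inc m₁ m₂ zA₁ zB₂) *
        fac ϑ t₁ t₂ out inc m₁ m₂ (cat zA₁ zA₂) (cat zB₁ zB₂) /
        fac ϑ t₁ t₂ out inc m₁ m₂ (cat zA₂ zB₂) (cat zA₁ zB₁)
      = fac ϑ t₁ t₂ out inc m₁ m₂ zA₁ zB₁ * fac ϑ t₁ t₂ out inc m₁ m₂ zA₂ zB₂ /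
          (fac ϑ t₁ t₂ out inc m₁ m₂ zA₂ zA₁ * fac ϑ t₁ t₂ out inc m₁ m₂ zB₂ zB₁) :=
  fac_bialgebra_key_general ϑ t₁ t₂ out inc m₁ m₂ zA₁ zA₂ zB₁ zB₂ h1 h2 h3
end
end
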